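/- Let p, q be integers with 1 ≤ p < q and assume p divides q. If v is a valley word, then the element of BS(p,q) represented by v commutes with a^p; that is, a^p · v = v · a^p holds in BS(p,q). -/

import Mathlib

inductive Letter : Type
  | a | A | t | T
  deriving DecidableEq

def bsRel (p q : ℤ) : Set (FreeGroup Bool) :=
  {FreeGroup.of true * (FreeGroup.of false) ^ p * (FreeGroup.of true)⁻¹ * (FreeGroup.of false) ^ (-q)}

abbrev BS (p q : ℤ) := PresentedGroup (bsRel p q)

def evalLetter (p q : ℤ) : Letter → BS p q
  | .a => PresentedGroup.of false
  | .A => (PresentedGroup.of false)⁻¹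
  | .t => PresentedGroup.of true
  | .T => (PresentedGroup.of true)⁻¹

def eval (p q : ℤ) (w : List Letter) : BS p q := (w.map (evalLetter p q)).prod

def aPow (α : ℤ) : List Letter :=
  if 0 ≤ α then List.replicate α.toNat Letter.a else List.replicate (-α).toNat Letter.A

def Geodesic (p q : ℤ) (w : List Letter) : Prop :=
  ∀ v : List Letter, eval p q v = eval p q w → w.length ≤ v.length

/-- Ranking of letters in the order `t < T < a < A`. -/
def letterIdx : Letter → ℕ
  | .t => 0
  | .T => 1
  | .a => 2
  | .A => 3

/-- Length-lexicographical strict order on words, with letters ordered `t < T < a < A`. -/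
def llLt (u v : List Letter) : Prop :=
  u.length < v.length ∨
    (u.length = v.length ∧ List.Lex (· < ·) (u.map letterIdx) (v.map letterIdx))

/-- `IsLlnf p q v w` : `v` is the length-lexicographical normal form of `w`,
i.e. `v` represents the same element as `w` and no word representing this element
precedes `v` in the length-lexicographical order. -/
def IsLlnf (p q : ℤ) (v w : List Letter) : Prop :=
  eval p q v = eval p q w ∧ ∀ u : List Letter, eval p q u = eval p q w → ¬ llLt u v

/-- A word contains no factors `a a⁻¹` or `a⁻¹ a`. -/
def Reduced (w : List Letter) : Prop :=
  (∀ u v : List Letter, w ≠ u ++ [Letter.a, Letter.A] ++ v) ∧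
  (∀ u v : List Letter, w ≠ u ++ [Letter.A, Letter.a] ++ v)

/-- A word is Britton-reduced: it has no factors `a a⁻¹`, `a⁻¹ a`,
`t a^{pμ} t⁻¹` or `t⁻¹ a^{qμ} t` (with `μ ∈ ℤ`). -/
def BrittonReduced (p q : ℤ) (w : List Letter) : Prop :=
  Reduced w ∧
  (∀ u v : List Letter, ∀ μ : ℤ, w ≠ u ++ [Letter.t] ++ aPow (p * μ) ++ [Letter.T] ++ v) ∧
  (∀ u v : List Letter, ∀ μ : ℤ, w ≠ u ++ [Letter.T] ++ aPow (q * μ) ++ [Letter.t] ++ v)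

/-- The t-sequence of a word: its subsequence of letters from `{t, t⁻¹}`. -/
def tSeq (w : List Letter) : List Letter :=
  w.filter (fun c => c == Letter.t || c == Letter.T)

/-- The geodesic length of a group element: the least length of a word representing it. -/
noncomputable def geodesicLength (p q : ℤ) (g : BS p q) : ℕ :=
  sInf {n : ℕ | ∃ w : List Letter, eval p q w = g ∧ w.length = n}

/-- A valley: every prefix has height `≤ 0` and the total height is `0`,
where the height of a prefix is (number of `t`'s) − (number of `t⁻¹`'s). -/
def IsValley (w : List Letter) : Prop :=
  (∀ u v : List Letter, w = u ++ v → u.count Letter.t ≤ u.count Letter.T) ∧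
  w.count Letter.t = w.count Letter.T

/-!
Write `q = p d`, `x = a` and `y = t`. The defining relation gives `x^(p d^(m+1)) y = y x^(p d^m)`
and `x^(p d^m) y⁻¹ = y⁻¹ x^(p d^(m+1))`, while every power of `x` commutes with `x^{±1}`. Hence
`x^(p d^m)` can be pushed through a word letter by letter, the exponent `m` going down by one at
each `t` and up by one at each `t⁻¹`, as long as `m` never has to drop below `0`. Starting with
`m = 0`, this is exactly the condition that the word is a valley, and since a valley has total
height `0`, the power `x^p` comes out unchanged.
-/

namespace BS

variable {p q : ℤ}

lemma eval_cons (c : Letter) (v : List Letter) :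
    eval p q (c :: v) = evalLetter p q c * eval p q v := by
  simp [eval]

lemma eval_aPow (α : ℤ) : eval p q (aPow α) = (PresentedGroup.of false : BS p q) ^ α := by
  unfold eval aPow
  split
  · rw [List.map_replicate, List.prod_replicate, evalLetter, ← zpow_natCast,
      Int.toNat_of_nonneg ‹_›]
  · rw [List.map_replicate, List.prod_replicate, evalLetter, inv_pow, ← zpow_natCast,
      Int.toNat_of_nonneg (by omega), ← zpow_neg, neg_neg]

lemma conj_of_true_zpow (k : ℤ) :
    (PresentedGroup.of true : BS p q) * (PresentedGroup.of false) ^ (p * k) *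
      (PresentedGroup.of true)⁻¹ = (PresentedGroup.of false) ^ (q * k) := by
  have hrel : (PresentedGroup.of true : BS p q) * (PresentedGroup.of false) ^ p *
      (PresentedGroup.of true)⁻¹ = (PresentedGroup.of false) ^ q := by
    have h := PresentedGroup.one_of_mem (rels := bsRel p q) rfl
    simp only [map_mul, map_zpow, map_inv] at h
    rwa [mul_eq_one_iff_eq_inv, zpow_neg, inv_inv] at h
  rw [zpow_mul, zpow_mul, ← hrel, conj_zpow]

lemma zpow_mul_of_true (k : ℤ) :
    (PresentedGroup.of false : BS p q) ^ (q * k) * PresentedGroup.of true =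
      PresentedGroup.of true * (PresentedGroup.of false) ^ (p * k) := by
  rw [← conj_of_true_zpow, inv_mul_cancel_right]

lemma zpow_mul_of_true_inv (k : ℤ) :
    (PresentedGroup.of false : BS p q) ^ (p * k) * (PresentedGroup.of true)⁻¹ =
      (PresentedGroup.of true)⁻¹ * (PresentedGroup.of false) ^ (q * k) := by
  rw [← conj_of_true_zpow]
  group

variable {d : ℤ}

lemma zpow_mul_evalLetter (hq : q = p * d) (c : Letter) {m : ℕ}
    (hm : [c].count Letter.t ≤ [c].count Letter.T + m) :
    (PresentedGroup.of false : BS p q) ^ (p * d ^ m) * evalLetter p q c =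
      evalLetter p q c *
        (PresentedGroup.of false) ^ (p * d ^ (m + [c].count Letter.T - [c].count Letter.t)) := by
  cases c with
  | a => simpa [evalLetter] using ((Commute.refl _).zpow_left _).eq
  | A => simpa [evalLetter] using ((Commute.refl _).zpow_left _).inv_right.eq
  | t =>
    obtain ⟨n, rfl⟩ : ∃ n, m = n + 1 := ⟨m - 1, by simp at hm; omega⟩
    have hexp : p * d ^ (n + 1) = q * d ^ n := by rw [hq, pow_succ']; ring
    simpa [evalLetter, hexp] using zpow_mul_of_true (p := p) (d ^ n)
  | T =>
    have hexp : p * d ^ (m + 1) = q * d ^ m := by rw [hq, pow_succ']; ring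
    simpa [evalLetter, hexp] using zpow_mul_of_true_inv (q := q) (d ^ m)

theorem zpow_mul_eval_of_depth_le (hq : q = p * d) (v : List Letter) (m : ℕ)
    (hv : ∀ u w : List Letter, v = u ++ w → u.count Letter.t ≤ u.count Letter.T + m) :
    (PresentedGroup.of false : BS p q) ^ (p * d ^ m) * eval p q v =
      eval p q v *
        (PresentedGroup.of false) ^ (p * d ^ (m + v.count Letter.T - v.count Letter.t)) := by
  induction v generalizing m with
  | nil => simp [eval]
  | cons c v ih =>
    have count_cons (l : List Letter) (x : Letter) : (c :: l).count x = [c].count x + l.count x :=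
      List.count_append (l₁ := [c])
    have hc := hv [c] v rfl
    have hv' : ∀ u w, v = u ++ w → u.count Letter.t ≤
        u.count Letter.T + (m + [c].count Letter.T - [c].count Letter.t) := by
      rintro u w rfl
      have := hv (c :: u) w rfl
      rw [count_cons u, count_cons u] at this
      omega
    have hexp : m + [c].count Letter.T - [c].count Letter.t + v.count Letter.T -
        v.count Letter.t = m + (c :: v).count Letter.T - (c :: v).count Letter.t := by
      rw [count_cons v, count_cons v]
      omega
    rw [eval_cons, ← mul_assoc, zpow_mul_evalLetter hq c hc, mul_assoc, ih _ hv', hexp,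
      mul_assoc]

end BS

theorem valley_commutes_with_ap_general (p q : ℤ) (hdvd : p ∣ q)
    (v : List Letter) (hv : IsValley v) :
    eval p q (aPow p) * eval p q v = eval p q v * eval p q (aPow p) := by
  obtain ⟨d, hq⟩ := hdvd
  have h := BS.zpow_mul_eval_of_depth_le hq v 0 (by simpa using hv.1)
  rw [hv.2, Nat.add_sub_cancel] at h
  simpa [BS.eval_aPow] using h

theorem valley_commutes_with_ap (p q : ℤ) (hp : 1 ≤ p) (hpq : p < q) (hdvd : p ∣ q)
    (v : List Letter) (hv : IsValley v) :
    eval p q (aPow p) * eval p q v = eval p q v * eval p q (aPow p) :=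
  valley_commutes_with_ap_general p q hdvd v hv
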